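/- arXiv:1707.00650 — 2 statements merged into one kernel-verified Lean document; each statement's English description precedes it below -/
import Mathlib

section
/- Let q be a prime power, v, d, k with 2 ≤ k ≤ v, d even, and δ ∈ ℤ. Define m(δ) = (([v,1]_q · A_q(v−1,d;k−1)) mod [k,1]_q) + δ·[k,1]_q, where [m,1]_q = (q^m−1)/(q−1). If there exists no q^{k−1}-divisible multiset of points in F_q^v of cardinality m(δ), then A_q(v,d;k) ≤ ⌊[v,1]_q·A_q(v−1,d;k−1)/[k,1]_q⌋ − δ − 1. -/
open scoped Classical

/-- A multiset of points (1-dimensional subspaces) `P` in an ambient `F`-vector space `V`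
is `q^r`-divisible if all its members are 1-dimensional and for every hyperplane `H`
the cardinality of the restriction `P ∩ H` is congruent to the cardinality of `P`
modulo `q^r`, where `q = Fintype.card F`. -/
def IsDivisible (F : Type) [Field F] [Fintype F] {V : Type} [AddCommGroup V] [Module F V]
    (r : ℕ) (P : Multiset (Submodule F V)) : Prop :=
  (∀ X ∈ P, Module.finrank F ↥X = 1) ∧
  ∀ H : Submodule F V, Module.finrank F ↥H + 1 = Module.finrank F V →
    Multiset.card (P.filter (fun X => X ≤ H)) ≡ Multiset.card P [MOD (Fintype.card F) ^ r]

/-- `Aq F v d k` is the maximum size of a set of `k`-dimensional subspaces of `F^v` with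
pairwise subspace distance at least `d` (a constant-dimension code). -/
noncomputable def Aq (F : Type) [Field F] [Fintype F] (v d k : ℕ) : ℕ :=
  sSup {n : ℕ | ∃ C : Finset (Submodule F (Fin v → F)),
    (∀ U ∈ C, Module.finrank F ↥U = k) ∧
    (∀ U ∈ C, ∀ W ∈ C, U ≠ W →
      d + Module.finrank F ↥U + Module.finrank F ↥W ≤ 2 * Module.finrank F ↥(U ⊔ W)) ∧
    C.card = n}

/-! Suppose `A_q(v,d;k) ≥ N := ⌊[v]_q λ / [k]_q⌋ - δ` with `λ = A_q(v-1,d;k-1)`, and take a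
code `C` of `N` codewords. The codewords through a point `P` form a code in `F^v / P`, so every
point lies on at most `λ` of them, and giving each point multiplicity `λ` minus the number of
codewords through it yields a multiset of `[v]_q λ - N [k]_q = m` points. A subspace of dimension
at least `k` has either none or `q^(dim - 1)` of its points outside any hyperplane, so this
`ℤ`-combination of the point sets of `F^v` and of the codewords is `q^(k-1)`-divisible,
contradicting the hypothesis. For `N < 0`, `-N` copies of a fixed `k`-space replace the code. -/

open Module

section LinearAlgebra

variable {K V V' : Type*} [Field K] [AddCommGroup V] [Module K V] [FiniteDimensional K V]
  [AddCommGroup V'] [Module K V']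

lemma finrank_map_add_finrank_ker_of_le (f : V →ₗ[K] V') {U : Submodule K V}
    (hU : LinearMap.ker f ≤ U) :
    finrank K (U.map f) + finrank K (LinearMap.ker f) = finrank K U := by
  have h := LinearMap.finrank_range_add_finrank_ker (f ∘ₗ U.subtype)
  rwa [LinearMap.range_comp, Submodule.range_subtype, LinearMap.ker_comp,
    LinearEquiv.finrank_eq (Submodule.comapSubtypeEquivOfLe hU)] at h

lemma finrank_inf_add_one_of_not_le {W H : Submodule K V} (hH : finrank K H + 1 = finrank K V)
    (hWH : ¬ W ≤ H) : finrank K ↥(W ⊓ H) + 1 = finrank K W := by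
  have hlt : H < W ⊔ H := lt_of_le_of_ne le_sup_right fun h => hWH (h ▸ le_sup_left)
  have := Submodule.finrank_lt_finrank_of_lt hlt
  have := Submodule.finrank_le (W ⊔ H)
  have := Submodule.finrank_sup_add_finrank_inf_eq W H
  omega

lemma exists_finrank_eq_of_le_finrank {k : ℕ} (hk : k ≤ finrank K V) :
    ∃ U : Submodule K V, finrank K U = k := by
  let b := Module.finBasis K V
  refine ⟨Submodule.span K (Set.range (b ∘ Fin.castLE hk)), ?_⟩
  rw [finrank_span_eq_card (b.linearIndependent.comp _ (Fin.castLE_injective hk)),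
    Fintype.card_fin]

end LinearAlgebra

lemma Multiset.card_filter_sum_replicate {α : Type*} (s : Finset α) (w : α → ℕ)
    (p : α → Prop) [DecidablePred p] :
    ((∑ a ∈ s, replicate (w a) a).filter p).card = ∑ a ∈ s with p a, w a := by
  rw [← countP_eq_card_filter, ← coe_countPAddMonoidHom, map_sum, Finset.sum_filter]
  refine Finset.sum_congr rfl fun a _ => ?_
  rw [coe_countPAddMonoidHom, ← coe_replicate, coe_countP, List.countP_replicate]
  simp

lemma Finset.sum_countP_eq_sum_map_card_filter {α β : Type*} (r : α → β → Prop)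
    [∀ a b, Decidable (r a b)] (s : Finset α) (M : Multiset β) :
    ∑ a ∈ s, M.countP (r a) = (M.map fun b => (s.filter (r · b)).card).sum := by
  induction M using Multiset.induction_on with
  | empty => simp
  | cons b M ih =>
    rw [Multiset.map_cons, Multiset.sum_cons, ← ih, Finset.card_filter,
      ← Finset.sum_add_distrib]
    simp only [Multiset.countP_cons, add_comm]

section Points

variable {F V : Type} [Field F] [AddCommGroup V] [Module F V] [Finite V]

noncomputable instance : Fintype (Submodule F V) := Fintype.ofFinite _

noncomputable def points (W : Submodule F V) : Finset (Submodule F V) :=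
  {X | X ≤ W ∧ finrank F X = 1}

@[simp]
lemma mem_points {W X : Submodule F V} : X ∈ points W ↔ X ≤ W ∧ finrank F X = 1 := by
  simp [points]

lemma points_filter_le (W U : Submodule F V) :
    (points W).filter (· ≤ U) = points (W ⊓ U) := by
  ext X
  simp only [Finset.mem_filter, mem_points, le_inf_iff]
  tauto

noncomputable def pointsEquivProjectivization (W : Submodule F V) :
    points W ≃ Projectivization F W :=
  ((Equiv.subtypeEquivRight fun _ => mem_points).trans
    ((W.mapIic.toEquiv.subtypeEquiv (q := fun X : Set.Iic W => finrank F X.1 = 1) fun Y => by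
      change _ ↔ finrank F (Y.map W.subtype) = 1
      rw [Submodule.finrank_map_subtype_eq]).trans
    (Equiv.subtypeSubtypeEquivSubtypeInter (· ≤ W) (fun X => finrank F X = 1))).symm).trans
    (Projectivization.equivSubmodule F W).symm

variable [Fintype F]

lemma card_points (W : Submodule F V) :
    (points W).card = ∑ j ∈ Finset.range (finrank F W), Fintype.card F ^ j := by
  rw [← Nat.card_eq_finsetCard, Nat.card_congr (pointsEquivProjectivization W),
    Projectivization.card_of_finrank F W rfl, Nat.card_eq_fintype_card]

lemma card_points_filter_not_le (W : Submodule F V) {H : Submodule F V}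
    (hH : finrank F H + 1 = finrank F V) :
    ((points W).filter (¬ · ≤ H)).card =
      if W ≤ H then 0 else Fintype.card F ^ (finrank F W - 1) := by
  split_ifs with hWH
  · refine Finset.card_eq_zero.2 (Finset.filter_eq_empty_iff.2 fun X hX => ?_)
    exact not_not.2 ((mem_points.1 hX).1.trans hWH)
  · have hsplit := Finset.card_filter_add_card_filter_not (s := points W) (· ≤ H)
    rw [points_filter_le, card_points, card_points, ← finrank_inf_add_one_of_not_le hH hWH,
      Finset.sum_range_succ] at hsplit
    rw [← finrank_inf_add_one_of_not_le hH hWH, Nat.add_sub_cancel]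
    omega

end Points

section PointMultiset

variable {F V : Type} [Field F] [AddCommGroup V] [Module F V] [Finite V]

noncomputable def pointMultiset (w : Submodule F V → ℕ) : Multiset (Submodule F V) :=
  ∑ X ∈ points ⊤, Multiset.replicate (w X) X

lemma card_filter_pointMultiset (w : Submodule F V → ℕ) (p : Submodule F V → Prop)
    [DecidablePred p] :
    ((pointMultiset w).filter p).card = ∑ X ∈ (points ⊤).filter p, w X :=
  Multiset.card_filter_sum_replicate _ _ _

lemma isDivisible_pointMultiset [Fintype F] (w : Submodule F V → ℕ) (r : ℕ)
    (hw : ∀ H : Submodule F V, finrank F H + 1 = finrank F V →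
      Fintype.card F ^ r ∣ ∑ X ∈ (points ⊤).filter (¬ · ≤ H), w X) :
    IsDivisible F r (pointMultiset w) := by
  refine ⟨fun X hX => ?_, fun H hH => ?_⟩
  · obtain ⟨Y, hY, hXY⟩ := Multiset.mem_sum.1 hX
    exact Multiset.eq_of_mem_replicate hXY ▸ (mem_points.1 hY).2
  · have hsplit := congrArg Multiset.card (Multiset.filter_add_not (· ≤ H) (pointMultiset w))
    rw [Multiset.card_add, card_filter_pointMultiset w (¬ · ≤ H)] at hsplit
    rw [← hsplit]
    exact ((Nat.modEq_zero_iff_dvd.2 (hw H hH)).add_left _).symm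

end PointMultiset

section Complement

variable {F V : Type} [Field F] [AddCommGroup V] [Module F V] [Finite V]

/-- Uses truncated subtraction: faithful only if each point lies on at most `lam` members of `C`. -/
noncomputable def complementWeight (lam : ℕ) (C D : Multiset (Submodule F V))
    (X : Submodule F V) : ℕ :=
  lam - C.countP (X ≤ ·) + D.countP (X ≤ ·)

noncomputable def complementMultiset (lam : ℕ) (C D : Multiset (Submodule F V)) :
    Multiset (Submodule F V) :=
  pointMultiset (complementWeight lam C D)

variable {lam k : ℕ} {C D : Multiset (Submodule F V)}

lemma sum_filter_points_complementWeight (p : Submodule F V → Prop) [DecidablePred p]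
    (hlam : ∀ X : Submodule F V, finrank F X = 1 → C.countP (X ≤ ·) ≤ lam) :
    ∑ X ∈ (points ⊤).filter p, (complementWeight lam C D X : ℤ) =
      lam * ((points ⊤).filter p).card - (C.map fun U => (((points U).filter p).card : ℤ)).sum +
        (D.map fun U => (((points U).filter p).card : ℤ)).sum := by
  have hfilter (U : Submodule F V) :
      ((points ⊤).filter p).filter (· ≤ U) = (points U).filter p := by
    ext X
    simp only [Finset.mem_filter, mem_points, le_top, true_and]
    tauto
  have hdouble (M : Multiset (Submodule F V)) :
      ∑ X ∈ (points ⊤).filter p, (M.countP (X ≤ ·) : ℤ) =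
        (M.map fun U => (((points U).filter p).card : ℤ)).sum := by
    have h := Finset.sum_countP_eq_sum_map_card_filter (· ≤ ·) ((points ⊤).filter p) M
    simp only [hfilter] at h
    rw [← Nat.cast_sum, h, Nat.cast_multiset_sum, Multiset.map_map]
    rfl
  rw [← hdouble, ← hdouble, mul_comm, ← nsmul_eq_mul, ← Finset.sum_const,
    ← Finset.sum_sub_distrib, ← Finset.sum_add_distrib]
  refine Finset.sum_congr rfl fun X hX => ?_
  have hX := hlam X (mem_points.1 (Finset.mem_filter.1 hX).1).2
  push_cast [complementWeight, Nat.cast_sub hX]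
  rfl

variable [Fintype F]

lemma sum_map_card_points_of_finrank_eq {M : Multiset (Submodule F V)}
    (hM : ∀ U ∈ M, finrank F U = k) :
    (M.map fun U => ((points U).card : ℤ)).sum =
      M.card * ∑ j ∈ Finset.range k, (Fintype.card F : ℤ) ^ j := by
  rw [Multiset.map_congr rfl fun U hU => by rw [card_points, hM U hU], Multiset.map_const',
    Multiset.sum_replicate, nsmul_eq_mul]
  push_cast
  rfl

lemma card_complementMultiset (hC : ∀ U ∈ C, finrank F U = k)
    (hD : ∀ U ∈ D, finrank F U = k)
    (hlam : ∀ X : Submodule F V, finrank F X = 1 → C.countP (X ≤ ·) ≤ lam) :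
    ((complementMultiset lam C D).card : ℤ) =
      lam * ∑ j ∈ Finset.range (finrank F V), (Fintype.card F : ℤ) ^ j -
        (C.card - D.card) * ∑ j ∈ Finset.range k, (Fintype.card F : ℤ) ^ j := by
  have h := sum_filter_points_complementWeight (D := D) (fun _ => True) hlam
  simp only [Finset.filter_true] at h
  rw [complementMultiset, ← Multiset.filter_true (pointMultiset _), card_filter_pointMultiset,
    Finset.filter_true, Nat.cast_sum, h, sum_map_card_points_of_finrank_eq hC,
    sum_map_card_points_of_finrank_eq hD, card_points, finrank_top]
  push_cast
  ring

lemma isDivisible_complementMultiset (hk : k ≤ finrank F V) (hC : ∀ U ∈ C, finrank F U = k)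
    (hD : ∀ U ∈ D, finrank F U = k)
    (hlam : ∀ X : Submodule F V, finrank F X = 1 → C.countP (X ≤ ·) ≤ lam) :
    IsDivisible F (k - 1) (complementMultiset lam C D) := by
  refine isDivisible_pointMultiset _ _ fun H hH => ?_
  have hdvd {W : Submodule F V} (hW : k ≤ finrank F W) :
      (Fintype.card F : ℤ) ^ (k - 1) ∣ ((points W).filter (¬ · ≤ H)).card := by
    rw [card_points_filter_not_le W hH]
    split_ifs
    · simp
    · exact_mod_cast pow_dvd_pow _ (Nat.sub_le_sub_right hW 1)
  rw [← Int.natCast_dvd_natCast, Nat.cast_sum, sum_filter_points_complementWeight _ hlam]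
  refine dvd_add (dvd_sub (dvd_mul_of_dvd_right ?_ _) (Multiset.dvd_sum ?_)) (Multiset.dvd_sum ?_)
  · exact hdvd (by rwa [finrank_top])
  · simp only [Multiset.mem_map]
    rintro _ ⟨U, hU, rfl⟩
    exact hdvd (hC U hU).ge
  · simp only [Multiset.mem_map]
    rintro _ ⟨U, hU, rfl⟩
    exact hdvd (hD U hU).ge

end Complement

section Codes

variable {K V : Type*} [Field K] [AddCommGroup V] [Module K V]

def IsConstDimCode (d k : ℕ) (C : Finset (Submodule K V)) : Prop :=
  (∀ U ∈ C, finrank K U = k) ∧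
    ∀ U ∈ C, ∀ W ∈ C, U ≠ W →
      d + finrank K U + finrank K W ≤ 2 * finrank K ↥(U ⊔ W)

lemma IsConstDimCode.mono {d k : ℕ} {C C' : Finset (Submodule K V)} (hC : IsConstDimCode d k C)
    (h : C' ⊆ C) : IsConstDimCode d k C' :=
  ⟨fun U hU => hC.1 U (h hU), fun U hU W hW => hC.2 U (h hU) W (h hW)⟩

lemma IsConstDimCode.image_map [FiniteDimensional K V] {V' : Type*} [AddCommGroup V']
    [Module K V'] {d k : ℕ} {C : Finset (Submodule K V)} (hC : IsConstDimCode d k C)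
    (f : V →ₗ[K] V') (hf : finrank K (LinearMap.ker f) = 1)
    (hCf : ∀ U ∈ C, LinearMap.ker f ≤ U) :
    IsConstDimCode d (k - 1) (C.image (Submodule.map f)) ∧
      (C.image (Submodule.map f)).card = C.card := by
  have hrank {U} (hU : LinearMap.ker f ≤ U) := finrank_map_add_finrank_ker_of_le f hU
  refine ⟨⟨?_, ?_⟩, Finset.card_image_of_injOn fun U hU W hW h => ?_⟩
  · simp only [Finset.mem_image]
    rintro _ ⟨U, hU, rfl⟩
    have := hrank (hCf U hU)
    have := hC.1 U hU
    omega
  · simp only [Finset.mem_image]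
    rintro _ ⟨U, hU, rfl⟩ _ ⟨W, hW, rfl⟩ hUW
    have := hC.2 U hU W hW (by rintro rfl; exact hUW rfl)
    have := hrank (hCf U hU)
    have := hrank (hCf W hW)
    have := hrank ((hCf U hU).trans (le_sup_left : U ≤ U ⊔ W))
    rw [← Submodule.map_sup]
    omega
  · simpa [Submodule.comap_map_eq, sup_eq_left.2 (hCf U hU), sup_eq_left.2 (hCf W hW)] using
      congrArg (Submodule.comap f) h

end Codes

section Aq

variable {F : Type} [Field F] [Fintype F] {v d k : ℕ}

lemma Aq_eq_sSup (v d k : ℕ) :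
    Aq F v d k = sSup {n | ∃ C : Finset (Submodule F (Fin v → F)),
      IsConstDimCode d k C ∧ C.card = n} := by
  simp only [Aq, IsConstDimCode, and_assoc]

lemma bddAbove_card_isConstDimCode (v d k : ℕ) :
    BddAbove {n | ∃ C : Finset (Submodule F (Fin v → F)),
      IsConstDimCode d k C ∧ C.card = n} :=
  ⟨Fintype.card (Submodule F (Fin v → F)), by
    rintro _ ⟨C, -, rfl⟩
    exact Finset.card_le_univ C⟩

lemma IsConstDimCode.card_le_Aq {C : Finset (Submodule F (Fin v → F))}
    (hC : IsConstDimCode d k C) : C.card ≤ Aq F v d k :=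
  Aq_eq_sSup (F := F) v d k ▸ le_csSup (bddAbove_card_isConstDimCode v d k) ⟨C, hC, rfl⟩

lemma exists_isConstDimCode_card_eq {n : ℕ} (hn : n ≤ Aq F v d k) :
    ∃ C : Finset (Submodule F (Fin v → F)), IsConstDimCode d k C ∧ C.card = n := by
  obtain ⟨C, hC, hCcard⟩ : ∃ C : Finset (Submodule F (Fin v → F)),
      IsConstDimCode d k C ∧ C.card = Aq F v d k := by
    rw [Aq_eq_sSup]
    refine Nat.sSup_mem ?_ (bddAbove_card_isConstDimCode v d k)
    exact ⟨0, ∅, ⟨by simp, by simp⟩, rfl⟩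
  obtain ⟨C', hC'C, rfl⟩ := Finset.exists_subset_card_eq (hCcard ▸ hn)
  exact ⟨C', hC.mono hC'C, rfl⟩

lemma IsConstDimCode.card_filter_le_Aq {C : Finset (Submodule F (Fin v → F))}
    (hC : IsConstDimCode d k C) {X : Submodule F (Fin v → F)} (hX : finrank F X = 1) :
    (C.filter (X ≤ ·)).card ≤ Aq F (v - 1) d (k - 1) := by
  have hquot : finrank F ((Fin v → F) ⧸ X) = finrank F (Fin (v - 1) → F) := by
    have := X.finrank_quotient_add_finrank
    simp only [finrank_fin_fun] at *
    omega
  let f := (LinearEquiv.ofFinrankEq _ _ hquot).toLinearMap ∘ₗ X.mkQ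
  have hker : LinearMap.ker f = X := by
    rw [LinearMap.ker_comp, LinearEquiv.ker, Submodule.comap_bot, Submodule.ker_mkQ]
  obtain ⟨hcode, hcard⟩ := (hC.mono (Finset.filter_subset _ C)).image_map f (hker ▸ hX)
    fun U hU => hker ▸ (Finset.mem_filter.1 hU).2
  exact hcard ▸ hcode.card_le_Aq

end Aq

theorem improved_johnson_bound_general (F : Type) [Field F] [Fintype F] (v d k : ℕ)
    (hkv : k ≤ v) (δ m : ℤ)
    (hm : m = ((∑ j ∈ Finset.range v, (Fintype.card F : ℤ) ^ j) *
          (Aq F (v - 1) d (k - 1) : ℤ)) % (∑ j ∈ Finset.range k, (Fintype.card F : ℤ) ^ j) +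
        δ * ∑ j ∈ Finset.range k, (Fintype.card F : ℤ) ^ j)
    (hne : ¬ ∃ P : Multiset (Submodule F (Fin v → F)),
        IsDivisible F (k - 1) P ∧ (Multiset.card P : ℤ) = m) :
    (Aq F v d k : ℤ) ≤
      ((∑ j ∈ Finset.range v, (Fintype.card F : ℤ) ^ j) * (Aq F (v - 1) d (k - 1) : ℤ)) /
          (∑ j ∈ Finset.range k, (Fintype.card F : ℤ) ^ j) - δ - 1 := by
  by_contra! hlt
  set N := (∑ j ∈ Finset.range v, (Fintype.card F : ℤ) ^ j) * (Aq F (v - 1) d (k - 1) : ℤ) /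
    (∑ j ∈ Finset.range k, (Fintype.card F : ℤ) ^ j) - δ with hN
  have hkv' : k ≤ finrank F (Fin v → F) := by rwa [finrank_fin_fun]
  have hNA : N.toNat ≤ Aq F v d k := by omega
  obtain ⟨C, hC, hCcard⟩ := exists_isConstDimCode_card_eq hNA
  obtain ⟨U₀, hU₀⟩ := exists_finrank_eq_of_le_finrank hkv'
  let D := Multiset.replicate (-N).toNat U₀
  have hD : ∀ U ∈ D, finrank F U = k := fun U hU => Multiset.eq_of_mem_replicate hU ▸ hU₀
  have hlam (X : Submodule F (Fin v → F)) (hX : finrank F X = 1) :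
      C.val.countP (X ≤ ·) ≤ Aq F (v - 1) d (k - 1) := by
    rw [Multiset.countP_eq_card_filter, ← Finset.filter_val]
    exact hC.card_filter_le_Aq hX
  refine hne ⟨_, isDivisible_complementMultiset hkv' hC.1 hD hlam, ?_⟩
  rw [card_complementMultiset hC.1 hD hlam, hm, Finset.card_val, hCcard, Multiset.card_replicate,
    Int.toNat_sub_toNat_neg, finrank_fin_fun, hN, Int.emod_def]
  ring

/-- Improved Johnson bound: with `m(δ)` the residue of `[v,1]_q·A_q(v-1,d;k-1)` modulo
`[k,1]_q` plus `δ·[k,1]_q`, if there is no `q^(k-1)`-divisible multiset of points in `F_q^v`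
of cardinality `m(δ)`, then `A_q(v,d;k) ≤ ⌊[v,1]_q·A_q(v-1,d;k-1)/[k,1]_q⌋ - δ - 1`. -/
theorem improved_johnson_bound (F : Type) [Field F] [Fintype F] (v d k : ℕ)
    (hk : 2 ≤ k) (hkv : k ≤ v) (hd : Even d) (δ m : ℤ)
    (hm : m = ((∑ j ∈ Finset.range v, (Fintype.card F : ℤ) ^ j) *
          (Aq F (v - 1) d (k - 1) : ℤ)) % (∑ j ∈ Finset.range k, (Fintype.card F : ℤ) ^ j) +
        δ * ∑ j ∈ Finset.range k, (Fintype.card F : ℤ) ^ j)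
    (hne : ¬ ∃ P : Multiset (Submodule F (Fin v → F)),
        IsDivisible F (k - 1) P ∧ (Multiset.card P : ℤ) = m) :
    (Aq F v d k : ℤ) ≤
      ((∑ j ∈ Finset.range v, (Fintype.card F : ℤ) ^ j) * (Aq F (v - 1) d (k - 1) : ℤ)) /
          (∑ j ∈ Finset.range k, (Fintype.card F : ℤ) ^ j) - δ - 1 :=
  improved_johnson_bound_general F v d k hkv δ m hm hne
end

section
/- For every prime power q ≥ 2, the number m = 2q^4 − q^3 + q − 1 has S_q(3)-adic expansion (q−1)·(q^3+q^2+q+1) + 1·(q^3+q^2+q) + (q−1)·(q^3+q^2) + (−2)·q^3, with leading coefficient −2 < 0; consequently there is no q^3-divisible multiset of points over F_q of cardinality 2q^4 − q^3 + q − 1. -/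
open scoped Classical

/-!
If `P` is a nonempty `q^(r+1)`-divisible multiset of points, averaging over hyperplanes gives a
hyperplane `H` with `q·|P ∩ H| < |P|`. Summing `|P| - |P ∩ H'|` over the `q + 1` hyperplanes `H'`
through a codimension-2 subspace `K` gives `q·(|P| - |P ∩ K|)`, so `P ∩ H` is `q^r`-divisible
inside `H`; moreover `|P ∩ H| ≡ |P| mod q^(r+1)`. For `|P| = (2q - 1)q^3 + (q - 1)` this forces
`|P ∩ H| ∈ {q - 1, q^3 + q - 1}`, the second size descends once more to `q - 1`, and a
`q^(r+1)`-divisible multiset of size `q - 1` would restrict to an empty one, whose size `0` is not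
`≡ q - 1 mod q^(r+1)`.
-/

open Module Finset

lemma Finset.sum_card_filter_eq_sum_map_card_filter {α β : Type*} (s : Finset β) (P : Multiset α)
    (R : α → β → Prop) [∀ a b, Decidable (R a b)] :
    ∑ b ∈ s, Multiset.card (P.filter (R · b)) = (P.map fun a => #{b ∈ s | R a b}).sum := by
  induction P using Multiset.induction_on with
  | empty => simp
  | cons a P ih =>
    simp only [Multiset.filter_cons, Multiset.card_add, sum_add_distrib, ih, Multiset.map_cons,
      Multiset.sum_cons, Finset.card_filter]
    congr 1
    exact sum_congr rfl fun b _ => by split_ifs <;> rfl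

section

variable (F : Type) [Field F] (V : Type) [AddCommGroup V] [Module F V] [Finite V]

noncomputable def hyperplanes : Finset (Submodule F V) :=
  (Set.toFinite {H : Submodule F V | finrank F H + 1 = finrank F V}).toFinset

variable {F V}

@[simp]
lemma mem_hyperplanes {H : Submodule F V} :
    H ∈ hyperplanes F V ↔ finrank F H + 1 = finrank F V :=
  Set.Finite.mem_toFinset _

lemma finrank_map_mkQ_add_one_eq_iff {K H : Submodule F V} (hKH : K ≤ H) :
    finrank F (H.map K.mkQ) + 1 = finrank F (V ⧸ K) ↔ finrank F H + 1 = finrank F V := by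
  have h₁ := (H.map K.mkQ).finrank_quotient_add_finrank
  have h₂ := H.finrank_quotient_add_finrank
  have h₃ := (Submodule.quotientQuotientEquivQuotient K H hKH).finrank_eq
  omega

variable [Fintype F]

local notation "q" => Fintype.card F

lemma card_hyperplanes : #(hyperplanes F V) = ∑ i ∈ range (finrank F V), q ^ i := by
  let e : {H : Submodule F V // finrank F H + 1 = finrank F V} ≃
      {W : Submodule F (Dual F V) // finrank F W = 1} :=
    { toFun H := ⟨H.1.dualAnnihilator, by
        have := Subspace.finrank_add_finrank_dualAnnihilator_eq H.1; omega⟩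
      invFun W := ⟨W.1.dualCoannihilator, by
        have := Subspace.finrank_add_finrank_dualCoannihilator_eq W.1; omega⟩
      left_inv H := Subtype.ext Subspace.dualAnnihilator_dualCoannihilator_eq
      right_inv W := Subtype.ext Subspace.dualCoannihilator_dualAnnihilator_eq }
  rw [hyperplanes, ← Nat.card_eq_card_finite_toFinset, Set.coe_ofPred,
    Nat.card_congr (e.trans (Projectivization.equivSubmodule F _).symm),
    Projectivization.card_of_finrank F _ Subspace.dual_finrank_eq, Nat.card_eq_fintype_card]

lemma card_hyperplanes_ge (K : Submodule F V) :
    #{H ∈ hyperplanes F V | K ≤ H} = ∑ i ∈ range (finrank F V - finrank F K), q ^ i := by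
  have : Finite (V ⧸ K) := Module.finite_of_finite F
  rw [← K.finrank_quotient, ← card_hyperplanes]
  refine card_nbij' (Submodule.map K.mkQ) (Submodule.comap K.mkQ) ?_ ?_ ?_ ?_
  · intro H hH
    simp only [Finset.mem_coe, Finset.mem_filter, mem_hyperplanes] at hH ⊢
    exact (finrank_map_mkQ_add_one_eq_iff hH.2).mpr hH.1
  · intro H' hH'
    simp only [Finset.mem_coe, Finset.mem_filter, mem_hyperplanes] at hH' ⊢
    refine ⟨(finrank_map_mkQ_add_one_eq_iff (K.le_comap_mkQ H')).mp ?_, K.le_comap_mkQ H'⟩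
    rwa [Submodule.map_comap_eq_of_surjective K.mkQ_surjective]
  · intro H hH
    simp only [Finset.mem_coe, Finset.mem_filter] at hH
    rw [Submodule.comap_map_mkQ, sup_eq_right.mpr hH.2]
  · intro H' _
    exact Submodule.map_comap_eq_of_surjective K.mkQ_surjective H'

lemma card_hyperplanes_ge_of_finrank_add_two {K : Submodule F V}
    (hK : finrank F K + 2 = finrank F V) : #{H ∈ hyperplanes F V | K ≤ H} = q + 1 := by
  rw [card_hyperplanes_ge, show finrank F V - finrank F K = 2 by omega]
  simp [sum_range_succ, add_comm]

lemma card_hyperplanes_ge_and_ge {K X : Submodule F V} (hK : finrank F K + 2 = finrank F V)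
    (hX : finrank F X = 1) :
    #{H ∈ hyperplanes F V | K ≤ H ∧ X ≤ H} = if X ≤ K then q + 1 else 1 := by
  simp_rw [← sup_le_iff]
  rw [card_hyperplanes_ge]
  split_ifs with hXK
  · rw [sup_eq_left.mpr hXK, ← card_hyperplanes_ge_of_finrank_add_two hK, card_hyperplanes_ge]
  · have hlt : finrank F ↥(K ⊓ X) < 1 :=
      hX ▸ Submodule.finrank_lt_finrank_of_lt (inf_lt_right.mpr hXK)
    have := Submodule.finrank_sup_add_finrank_inf_eq K X
    rw [show finrank F V - finrank F ↥(K ⊔ X) = 1 by omega]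
    simp

lemma sum_card_filter_hyperplanes_ge {P : Multiset (Submodule F V)}
    (hP : ∀ X ∈ P, finrank F X = 1) {K : Submodule F V} (hK : finrank F K + 2 = finrank F V) :
    ∑ H ∈ hyperplanes F V with K ≤ H, Multiset.card (P.filter (· ≤ H)) =
      Multiset.card P + q * Multiset.card (P.filter (· ≤ K)) := by
  have in_K : ∀ X ∈ P.filter (· ≤ K), #{H ∈ hyperplanes F V | K ≤ H ∧ X ≤ H} = q + 1 :=
    fun X hX => by
      rw [Multiset.mem_filter] at hX
      rw [card_hyperplanes_ge_and_ge hK (hP X hX.1), if_pos hX.2]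
  have off_K : ∀ X ∈ P.filter (¬ · ≤ K), #{H ∈ hyperplanes F V | K ≤ H ∧ X ≤ H} = 1 :=
    fun X hX => by
      rw [Multiset.mem_filter] at hX
      rw [card_hyperplanes_ge_and_ge hK (hP X hX.1), if_neg hX.2]
  have hsplit := Multiset.filter_add_not (· ≤ K) P
  rw [sum_card_filter_eq_sum_map_card_filter]
  conv_lhs => rw [← hsplit]
  simp only [Multiset.map_add, Multiset.sum_add, Finset.filter_filter]
  rw [Multiset.map_congr rfl in_K, Multiset.map_congr rfl off_K]
  simp only [Multiset.map_const', Multiset.sum_replicate, smul_eq_mul]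
  rw [← congrArg Multiset.card hsplit, Multiset.card_add]
  ring

lemma exists_hyperplane_mul_card_filter_lt {P : Multiset (Submodule F V)}
    (hP : ∀ X ∈ P, finrank F X = 1) (hP0 : P ≠ 0) :
    ∃ H ∈ hyperplanes F V, q * Multiset.card (P.filter (· ≤ H)) < Multiset.card P := by
  obtain ⟨X₀, hX₀⟩ := Multiset.exists_mem_of_ne_zero hP0
  obtain ⟨d, hd⟩ : ∃ d, finrank F V = d + 1 :=
    ⟨finrank F V - 1, by have := hP X₀ hX₀; have := X₀.finrank_le; omega⟩
  set θ := ∑ i ∈ range d, q ^ i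
  have through_point : ∀ X ∈ P, #{H ∈ hyperplanes F V | X ≤ H} = θ := fun X hX => by
    rw [card_hyperplanes_ge, hP X hX, hd, Nat.add_sub_cancel]
  have total : #(hyperplanes F V) = q * θ + 1 := by
    rw [card_hyperplanes, hd, sum_range_succ', mul_sum]
    simp [pow_succ, mul_comm]
  have double_count : ∑ H ∈ hyperplanes F V, Multiset.card (P.filter (· ≤ H)) =
      Multiset.card P * θ := by
    rw [sum_card_filter_eq_sum_map_card_filter, Multiset.map_congr rfl through_point]
    simp
  by_contra! h
  have : #(hyperplanes F V) * Multiset.card P ≤ q * (Multiset.card P * θ) :=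
    calc #(hyperplanes F V) * Multiset.card P
        = ∑ H ∈ hyperplanes F V, Multiset.card P := by simp
      _ ≤ ∑ H ∈ hyperplanes F V, q * Multiset.card (P.filter (· ≤ H)) := sum_le_sum h
      _ = q * (Multiset.card P * θ) := by rw [← mul_sum, double_count]
  rw [total] at this
  have := Multiset.card_pos.mpr hP0
  nlinarith

lemma IsDivisible.card_filter_modEq_of_finrank_add_two {r : ℕ} {P : Multiset (Submodule F V)}
    (hP : IsDivisible F (r + 1) P) {K : Submodule F V} (hK : finrank F K + 2 = finrank F V) :
    Multiset.card (P.filter (· ≤ K)) ≡ Multiset.card P [MOD q ^ r] := by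
  set S := {H ∈ hyperplanes F V | K ≤ H}
  have hdvd : ∀ H ∈ S, (q : ℤ) ^ (r + 1) ∣
      Multiset.card P - Multiset.card (P.filter (· ≤ H)) := fun H hH => by
    exact_mod_cast Nat.modEq_iff_dvd.mp (hP.2 H (mem_hyperplanes.mp (mem_filter.mp hH).1))
  have hsum : ∑ H ∈ S, ((Multiset.card P : ℤ) - Multiset.card (P.filter (· ≤ H))) =
      q * (Multiset.card P - Multiset.card (P.filter (· ≤ K))) := by
    rw [sum_sub_distrib, sum_const, card_hyperplanes_ge_of_finrank_add_two hK, ← Nat.cast_sum,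
      sum_card_filter_hyperplanes_ge hP.1 hK]
    push_cast
    ring
  have := dvd_sum hdvd
  rw [hsum, pow_succ', mul_dvd_mul_iff_left (by positivity)] at this
  exact Nat.modEq_iff_dvd.mpr (by exact_mod_cast this)

lemma IsDivisible.restrict {r : ℕ} {P : Multiset (Submodule F V)} (hP : IsDivisible F (r + 1) P)
    {H : Submodule F V} (hH : H ∈ hyperplanes F V) :
    IsDivisible F r ((P.filter (· ≤ H)).map (Submodule.comap H.subtype)) := by
  rw [mem_hyperplanes] at hH
  refine ⟨?_, fun K' hK' => ?_⟩
  · simp only [Multiset.mem_map, Multiset.mem_filter]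
    rintro _ ⟨X, ⟨hX, hXH⟩, rfl⟩
    rw [(Submodule.comapSubtypeEquivOfLe hXH).finrank_eq]
    exact hP.1 X hX
  set K := K'.map H.subtype
  have hK : finrank F K + 2 = finrank F V := by
    rw [← (Submodule.equivMapOfInjective _ H.injective_subtype K').finrank_eq]
    omega
  have hiff : ∀ X : Submodule F V, X.comap H.subtype ≤ K' ∧ X ≤ H ↔ X ≤ K := fun X => by
    constructor
    · rintro ⟨hXK', hXH⟩
      calc X = H ⊓ X := (inf_eq_right.mpr hXH).symm
        _ = (X.comap H.subtype).map H.subtype := (Submodule.map_comap_subtype H X).symm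
        _ ≤ K := Submodule.map_mono hXK'
    · intro hXK
      refine ⟨?_, hXK.trans (Submodule.map_subtype_le H K')⟩
      rw [← Submodule.comap_map_eq_of_injective H.injective_subtype K']
      exact Submodule.comap_mono hXK
  rw [Multiset.filter_map, Multiset.card_map, Multiset.card_map, Multiset.filter_filter]
  simp only [Function.comp_apply, hiff]
  exact (hP.card_filter_modEq_of_finrank_add_two hK).trans
    ((hP.2 H hH).symm.of_dvd (pow_dvd_pow _ r.le_succ))

lemma IsDivisible.exists_restrict_card_eq {r : ℕ} {P : Multiset (Submodule F V)} {c : ℤ}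
    (hP : IsDivisible F (r + 1) P) (hP0 : P ≠ 0) (hc : c < q ^ (r + 1))
    (hPc : (q : ℤ) ^ (r + 1) ∣ Multiset.card P - c) :
    ∃ (H : Submodule F V) (Q : Multiset (Submodule F H)) (t : ℤ), IsDivisible F r Q ∧ 0 ≤ t ∧
      (Multiset.card Q : ℤ) = c + q ^ (r + 1) * t ∧ q * (Multiset.card Q : ℤ) < Multiset.card P := by
  obtain ⟨H, hH, hlt⟩ := exists_hyperplane_mul_card_filter_lt hP.1 hP0
  set Q := (P.filter (· ≤ H)).map (Submodule.comap H.subtype)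
  have hQ : Multiset.card Q = Multiset.card (P.filter (· ≤ H)) := Multiset.card_map _ _
  obtain ⟨t, ht⟩ : (q : ℤ) ^ (r + 1) ∣ Multiset.card Q - c := by
    have := Nat.modEq_iff_dvd.mp (hP.2 H (mem_hyperplanes.mp hH))
    push_cast at this
    rw [hQ, show (Multiset.card (P.filter (· ≤ H)) : ℤ) - c =
      (Multiset.card P - c) - (Multiset.card P - Multiset.card (P.filter (· ≤ H))) by ring]
    exact dvd_sub hPc this
  refine ⟨H, Q, t, hP.restrict hH, ?_, by linarith, by rw [hQ]; exact_mod_cast hlt⟩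
  by_contra! ht0
  have hM : (0 : ℤ) < q ^ (r + 1) := by positivity
  have : (q : ℤ) ^ (r + 1) * t ≤ -(q : ℤ) ^ (r + 1) := by nlinarith
  linarith [(Multiset.card Q).cast_nonneg (α := ℤ)]

lemma sub_one_lt_card_pow {k : ℕ} (hk : k ≠ 0) : (q : ℤ) - 1 < q ^ k :=
  (sub_one_lt _).trans_le (le_self_pow₀ (Nat.one_le_cast.mpr Fintype.card_pos) hk)

lemma IsDivisible.card_ne_sub_one {r : ℕ} {P : Multiset (Submodule F V)}
    (hP : IsDivisible F (r + 1) P) : (Multiset.card P : ℤ) ≠ q - 1 := by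
  intro hn
  have hq : (2 : ℤ) ≤ q := by exact_mod_cast Fintype.one_lt_card
  have hP0 : P ≠ 0 := by rintro rfl; simp at hn; linarith
  obtain ⟨_, _, t, -, ht, hQ, hlt⟩ :=
    hP.exists_restrict_card_eq hP0 (sub_one_lt_card_pow r.succ_ne_zero) (by simp [hn])
  rw [hQ, hn] at hlt
  nlinarith [mul_nonneg (by positivity : (0 : ℤ) ≤ q ^ (r + 1)) ht]

lemma IsDivisible.card_ne_pow_three_add_sub_one {P : Multiset (Submodule F V)}
    (hP : IsDivisible F 2 P) : (Multiset.card P : ℤ) ≠ q ^ 3 + q - 1 := by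
  intro hn
  have hq : (2 : ℤ) ≤ q := by exact_mod_cast Fintype.one_lt_card
  have hP0 : P ≠ 0 := by rintro rfl; simp at hn; nlinarith [pow_pos (by linarith : (0 : ℤ) < q) 3]
  obtain ⟨_, Q, t, hQ, ht, hcard, hlt⟩ := hP.exists_restrict_card_eq (r := 1) hP0
    (sub_one_lt_card_pow two_ne_zero) ⟨q, by rw [hn]; ring⟩
  norm_num at hcard
  rw [hcard, hn] at hlt
  obtain rfl : t = 0 := by
    by_contra! h
    have h1 : (q : ℤ) ^ 3 ≤ q ^ 3 * t := le_mul_of_one_le_right (by positivity) (by omega)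
    nlinarith [sq_nonneg ((q : ℤ) - 1)]
  exact hQ.card_ne_sub_one (r := 0) (by simpa using hcard)

lemma IsDivisible.card_ne_two_mul_pow_four_sub_pow_three_add_sub_one
    {P : Multiset (Submodule F V)} (hP : IsDivisible F 3 P) :
    (Multiset.card P : ℤ) ≠ 2 * q ^ 4 - q ^ 3 + q - 1 := by
  intro hn
  have hq : (2 : ℤ) ≤ q := by exact_mod_cast Fintype.one_lt_card
  have hP0 : P ≠ 0 := by rintro rfl; simp at hn; nlinarith [pow_pos (by linarith : (0 : ℤ) < q) 3]
  obtain ⟨_, Q, t, hQ, ht, hcard, hlt⟩ := hP.exists_restrict_card_eq (r := 2) hP0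
    (sub_one_lt_card_pow three_ne_zero) ⟨2 * q - 1, by rw [hn]; ring⟩
  norm_num at hcard
  rw [hcard, hn] at hlt
  have : t ≤ 1 := by
    by_contra! h
    have h2 : (q : ℤ) ^ 4 * 2 ≤ q ^ 4 * t := mul_le_mul_of_nonneg_left (by omega) (by positivity)
    nlinarith [sq_nonneg ((q : ℤ) - 1), pow_pos (by omega : (0 : ℤ) < q) 3]
  interval_cases t
  · exact hQ.card_ne_sub_one (r := 1) (by simpa using hcard)
  · exact hQ.card_ne_pow_three_add_sub_one (by rw [hcard]; ring)

end

/-- For every prime power `q`, `2q^4 - q^3 + q - 1` has `S_q(3)`-adic expansion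
`(q-1)(q^3+q^2+q+1) + 1·(q^3+q^2+q) + (q-1)(q^3+q^2) + (-2)·q^3` with leading coefficient
`-2 < 0`; consequently there is no `q^3`-divisible multiset of points over `F_q` of
cardinality `2q^4 - q^3 + q - 1`. -/
theorem no_q3_divisible_of_special_card (F : Type) [Field F] [Fintype F] :
    (2 * (Fintype.card F : ℤ) ^ 4 - (Fintype.card F : ℤ) ^ 3 + (Fintype.card F : ℤ) - 1 =
        ((Fintype.card F : ℤ) - 1) *
            ((Fintype.card F : ℤ) ^ 3 + (Fintype.card F : ℤ) ^ 2 + (Fintype.card F : ℤ) + 1) +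
          1 * ((Fintype.card F : ℤ) ^ 3 + (Fintype.card F : ℤ) ^ 2 + (Fintype.card F : ℤ)) +
          ((Fintype.card F : ℤ) - 1) * ((Fintype.card F : ℤ) ^ 3 + (Fintype.card F : ℤ) ^ 2) +
          (-2) * (Fintype.card F : ℤ) ^ 3) ∧
    ¬ ∃ (m : ℕ) (P : Multiset (Submodule F (Fin m → F))),
        IsDivisible F 3 P ∧
          (Multiset.card P : ℤ) =
            2 * (Fintype.card F : ℤ) ^ 4 - (Fintype.card F : ℤ) ^ 3 +
              (Fintype.card F : ℤ) - 1 := by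
  refine ⟨by ring, ?_⟩
  rintro ⟨m, P, hP, hcard⟩
  exact hP.card_ne_two_mul_pow_four_sub_pow_three_add_sub_one hcard
end
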